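/- Let d, P, k ≥ 1 be integers with k ≤ d, let 0 < α ≤ 1 and 0 < β < 1, let C ≥ max(8Pk, 8k/(Pα)), and let R ≥ 8·ln(2d/β). For the random count-median-of-means sketch with parameters (R, P, C) and every z ∈ ℝ^d, with probability at least 1 − β, simultaneously for all q ∈ {1,…,d}: (U(S(z))_q − z_q)² ≤ α·‖z_tail(k)‖²/k. -/

import Mathlib

open MeasureTheory ProbabilityTheory
open scoped ENNReal NNReal

noncomputable section

/-- Uniform probability measure on a finite type. -/
def unifMeasure (α : Type*) [Fintype α] [MeasurableSpace α] : Measure α :=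
  (Fintype.card α : ℝ≥0∞)⁻¹ • Measure.count

/-- Randomness of a count-mean sketch with parameters `(P, C)` on `ℝ^d`:
for each `p : Fin P` a hash function `h_p : Fin d → Fin C` and sign bits `s_p : Fin d → Bool`,
all mutually independent and uniform (hence jointly: the uniform measure on this type). -/
abbrev SketchSpace (d P C : ℕ) : Type :=
  (Fin P → Fin d → Fin C) × (Fin P → Fin d → Bool)

/-- Sign associated to a boolean. -/
def sgn (b : Bool) : ℝ := if b then 1 else -1

/-- The count-mean sketch `S z ∈ ℝ^{P×C}`:
`(S z)_{(p,c)} = (1/√P) ∑ i, s_p(i)·1[h_p(i)=c]·z_i`. -/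
def Sk {d P C : ℕ} (ω : SketchSpace d P C) (z : Fin d → ℝ) : Fin P × Fin C → ℝ :=
  fun pc => (Real.sqrt P)⁻¹ *
    ∑ i : Fin d, sgn (ω.2 pc.1 i) * (if ω.1 pc.1 i = pc.2 then (1 : ℝ) else 0) * z i

/-- `Sᵀ y ∈ ℝ^d`: `(Sᵀ y)_q = (1/√P) ∑ p, s_p(q)·y_{(p, h_p(q))}`. -/
def SkT {d P C : ℕ} (ω : SketchSpace d P C) (y : Fin P × Fin C → ℝ) : Fin d → ℝ :=
  fun q => (Real.sqrt P)⁻¹ * ∑ p : Fin P, sgn (ω.2 p q) * y (p, ω.1 p q)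

/-- Euclidean (ℓ₂) norm on `ℝ^d`. -/
def norm2 {d : ℕ} (z : Fin d → ℝ) : ℝ := Real.sqrt (∑ i, (z i) ^ 2)

/-- `w` has at most `k` nonzero coordinates. -/
def sparse {d : ℕ} (k : ℕ) (w : Fin d → ℝ) : Prop :=
  ∃ I : Finset (Fin d), I.card ≤ k ∧ ∀ i ∉ I, w i = 0

/-- The tail norm `‖z_tail(k)‖`: the minimum of `‖z - w‖₂` over `k`-sparse `w`. -/
def tailNorm {d : ℕ} (k : ℕ) (z : Fin d → ℝ) : ℝ :=
  sInf {t : ℝ | ∃ w : Fin d → ℝ, sparse k w ∧ t = norm2 (fun i => z i - w i)}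

/-- `w` is a top-`m` truncation of `v`: it keeps the entries of `v` on a set `I` of `m`
coordinates of largest absolute value and zeroes out the rest. -/
def IsTopTrunc {d : ℕ} (m : ℕ) (v w : Fin d → ℝ) : Prop :=
  ∃ I : Finset (Fin d), I.card = m ∧ (∀ i ∈ I, ∀ j ∉ I, |v j| ≤ |v i|) ∧
    (∀ i ∈ I, w i = v i) ∧ ∀ i ∉ I, w i = 0

/-- Symmetric median: the midpoint of the `⌈R/2⌉`-th and `(⌊R/2⌋+1)`-th smallest entries. -/
def med {R : ℕ} (x : Fin R → ℝ) : ℝ :=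
  if h : R = 0 then 0
  else (x (Tuple.sort x ⟨(R + 1) / 2 - 1, by omega⟩) + x (Tuple.sort x ⟨R / 2, by omega⟩)) / 2

/-- Randomness of a count-median-of-means sketch: `R` independent count-mean sketches. -/
abbrev MoMSpace (d P C R : ℕ) : Type := Fin R → SketchSpace d P C

/-- Median-of-means unsketching: `U(y)_q = med_r ((S^{(r)})ᵀ y^{(r)})_q`. -/
def MoMU {d P C R : ℕ} (ω : MoMSpace d P C R) (y : Fin R → Fin P × Fin C → ℝ) : Fin d → ℝ :=
  fun q => med fun r => SkT (ω r) (y r) q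

/-!
For a single count-mean sketch, `(Sᵀ S z)_q - z_q` is `1/P` times a sum of cross terms
`s_p(q) s_p(i) 1[h_p(i) = h_p(q)] z_i` over `i ≠ q`. Put the `k` largest coordinates of `z` in a
set `I`. A hash collision of `q` with `I` has probability at most `P k / C ≤ 1/8`. The cross terms
from outside `I` are orthogonal in the signs, so their contribution to the error has second
moment at most `‖z_tail(k)‖² / (P C)`, and Chebyshev's inequality with `C ≥ 8k/(Pα)` gives another `1/8`. So
each repetition misses with probability at most `1/4`. The median misses only if at least
half of the `R` independent repetitions miss. Markov's inequality for `3^(number of misses)`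
bounds this by `3^⌊R/2⌋ / 2^R ≤ β/d`, and a union bound over the `d` coordinates finishes the proof.
-/

open Finset

lemma sgn_mul_self (b : Bool) : sgn b * sgn b = 1 := by
  cases b <;> norm_num [sgn]

section SignFlip

variable {ι κ : Type*} [DecidableEq ι] [DecidableEq κ]

def flipSign (a : ι) (b : κ) : Equiv.Perm (ι → κ → Bool) :=
  Equiv.piCongrRight fun i => Equiv.piCongrRight fun j =>
    if i = a ∧ j = b then Equiv.boolNot else Equiv.refl Bool

lemma sgn_flipSign_apply (a : ι) (b : κ) (s : ι → κ → Bool) (i : ι) (j : κ) :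
    sgn (flipSign a b s i j) = if i = a ∧ j = b then -sgn (s i j) else sgn (s i j) := by
  simp only [flipSign, Equiv.piCongrRight_apply, Pi.map_apply]
  split_ifs
  · cases s i j <;> simp [sgn]
  · rfl

variable [Fintype ι] [Fintype κ]

lemma sum_eq_zero_of_flipSign (a : ι) (b : κ) {f : (ι → κ → Bool) → ℝ}
    (hf : ∀ s, f (flipSign a b s) = -f s) : ∑ s, f s = 0 := by
  have h := Fintype.sum_equiv (flipSign a b) f (fun s => -f s) (fun s => by rw [hf, neg_neg])
  rw [sum_neg_distrib] at h
  linarith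

lemma sum_sgn_mul_sgn {q : κ} (c c' : ι × κ) (hc : c.2 ≠ q) (hc' : c'.2 ≠ q) :
    ∑ s : ι → κ → Bool, sgn (s c.1 q) * sgn (s c.1 c.2) * (sgn (s c'.1 q) * sgn (s c'.1 c'.2)) =
      if c = c' then (Fintype.card (ι → κ → Bool) : ℝ) else 0 := by
  obtain ⟨p, i⟩ := c
  obtain ⟨p', i'⟩ := c'
  dsimp only at hc hc' ⊢
  split_ifs with h
  · obtain ⟨rfl, rfl⟩ := Prod.mk.inj h
    have hone : ∀ s : ι → κ → Bool, sgn (s p q) * sgn (s p i) * (sgn (s p q) * sgn (s p i)) = 1 :=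
      fun s => by rw [mul_mul_mul_comm, sgn_mul_self, sgn_mul_self, one_mul]
    simp [hone]
  obtain rfl | hp := eq_or_ne p p'
  · have hii' : i ≠ i' := fun e => h (by rw [e])
    refine sum_eq_zero_of_flipSign p i fun s => ?_
    simp only [sgn_flipSign_apply, hc.symm, hii'.symm, and_false, and_true, if_false, if_true]
    ring
  · refine sum_eq_zero_of_flipSign p q fun s => ?_
    simp only [sgn_flipSign_apply, hc, hp.symm, and_false, false_and, and_true, if_false, if_true]
    ring

end SignFlip

lemma card_mul_card_filter_apply_eq {ι α : Type*} [Fintype ι] [DecidableEq ι] [Fintype α]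
    [DecidableEq α] {i j : ι} (hij : i ≠ j) :
    Fintype.card α * #{f : ι → α | f i = f j} = Fintype.card (ι → α) := by
  let e : {f : ι → α // f i = f j} ≃ ({k // k ≠ i} → α) :=
    { toFun f k := f.1 k
      invFun g := ⟨fun k => if h : k = i then g ⟨j, hij.symm⟩ else g ⟨k, h⟩, by simp [hij.symm]⟩
      left_inv f := by
        ext k
        by_cases h : k = i
        · subst h; simp [f.2]
        · simp [h]
      right_inv g := by
        ext k
        simp [k.2] }
  rw [← Fintype.card_subtype, Fintype.card_congr e,
    Fintype.card_congr (Equiv.piSplitAt i fun _ => α), Fintype.card_prod]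

lemma card_mul_card_filter_apply_apply_eq {ι κ α : Type*} [Fintype ι] [DecidableEq ι] [Fintype κ]
    [DecidableEq κ] [Fintype α] [DecidableEq α] (p : ι) {i q : κ} (hiq : i ≠ q) :
    Fintype.card α * #{h : ι → κ → α | h p i = h p q} = Fintype.card (ι → κ → α) := by
  rw [card_equiv (Equiv.curry _ _ _).symm (t := {f : ι × κ → α | f (p, i) = f (p, q)})
    fun h => by simp, card_mul_card_filter_apply_eq (by simpa using hiq),
    Fintype.card_congr (Equiv.curry _ _ _)]

lemma sum_sq_sum_mul_eq_of_orthogonal {Ω ι : Type*} [Fintype Ω] [DecidableEq ι] (S : Finset ι)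
    (X : ι → Ω → ℝ) {N : ℝ}
    (hX : ∀ c ∈ S, ∀ c' ∈ S, ∑ ω, X c ω * X c' ω = if c = c' then N else 0) (a : ι → ℝ) :
    ∑ ω, (∑ c ∈ S, a c * X c ω) ^ 2 = N * ∑ c ∈ S, a c ^ 2 := by
  calc ∑ ω, (∑ c ∈ S, a c * X c ω) ^ 2
      = ∑ c ∈ S, ∑ c' ∈ S, a c * a c' * ∑ ω, X c ω * X c' ω := by
        simp_rw [sq, sum_mul_sum, mul_sum]
        rw [sum_comm]
        refine sum_congr rfl fun c _ => ?_
        rw [sum_comm]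
        exact sum_congr rfl fun c' _ => sum_congr rfl fun ω _ => by ring
    _ = ∑ c ∈ S, ∑ c' ∈ S, if c = c' then a c * a c' * N else 0 :=
        sum_congr rfl fun c hc => sum_congr rfl fun c' hc' => by
          rw [hX c hc c' hc', mul_ite, mul_zero]
    _ = N * ∑ c ∈ S, a c ^ 2 := by
        simp only [sum_ite_eq, mul_sum]
        exact sum_congr rfl fun c hc => by rw [if_pos hc]; ring

lemma exists_card_le_sum_compl_sq_le_tailNorm_sq {d : ℕ} (k : ℕ) (z : Fin d → ℝ) :
    ∃ I : Finset (Fin d), #I ≤ k ∧ ∑ i ∈ Iᶜ, z i ^ 2 ≤ tailNorm k z ^ 2 := by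
  obtain ⟨I, hI, hImax⟩ := exists_max_image {J : Finset (Fin d) | #J ≤ k} (∑ i ∈ ·, z i ^ 2)
    ⟨∅, by simp⟩
  rw [mem_filter] at hI
  refine ⟨I, hI.2, ?_⟩
  have hsplit : ∀ J : Finset (Fin d), ∑ i ∈ Jᶜ, z i ^ 2 = ∑ i, z i ^ 2 - ∑ i ∈ J, z i ^ 2 :=
    fun J => eq_sub_of_add_eq (sum_compl_add_sum J _)
  have hlower : ∀ t ∈ {t : ℝ | ∃ w : Fin d → ℝ, sparse k w ∧ t = norm2 (fun i => z i - w i)},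
      Real.sqrt (∑ i ∈ Iᶜ, z i ^ 2) ≤ t := by
    rintro t ⟨w, ⟨J, hJk, hJ⟩, rfl⟩
    refine Real.sqrt_le_sqrt ?_
    calc ∑ i ∈ Iᶜ, z i ^ 2 ≤ ∑ i ∈ Jᶜ, z i ^ 2 := by
          rw [hsplit, hsplit]
          linarith [hImax J (mem_filter.2 ⟨mem_univ J, hJk⟩)]
      _ = ∑ i ∈ Jᶜ, (z i - w i) ^ 2 :=
          sum_congr rfl fun i hi => by rw [hJ i (mem_compl.1 hi), sub_zero]
      _ ≤ ∑ i, (z i - w i) ^ 2 :=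
          sum_le_sum_of_subset_of_nonneg (subset_univ _) fun i _ _ => sq_nonneg _
  have hsparse : sparse k fun i => if i ∈ I then z i else 0 :=
    ⟨I, hI.2, fun i hi => if_neg hi⟩
  have htail : Real.sqrt (∑ i ∈ Iᶜ, z i ^ 2) ≤ tailNorm k z :=
    le_csInf ⟨_, _, hsparse, rfl⟩ hlower
  calc ∑ i ∈ Iᶜ, z i ^ 2 = Real.sqrt (∑ i ∈ Iᶜ, z i ^ 2) ^ 2 :=
        (Real.sq_sqrt (sum_nonneg fun i _ => sq_nonneg _)).symm
    _ ≤ tailNorm k z ^ 2 := pow_le_pow_left₀ (Real.sqrt_nonneg _) htail 2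

lemma cast_card_filter_lt_le_of_sum_le {Ω : Type*} [Fintype Ω] {f : Ω → ℝ} (hf : ∀ ω, 0 ≤ f ω)
    {t c : ℝ} (ht : 0 ≤ t) (hc : 0 ≤ c) (h : ∑ ω, f ω ≤ c * t) :
    (#{ω | t < f ω} : ℝ) ≤ c := by
  obtain rfl | ht := ht.eq_or_lt
  · have hzero : ∀ ω, f ω = 0 := fun ω =>
      (sum_eq_zero_iff_of_nonneg fun ω _ => hf ω).1
        (le_antisymm (by simpa using h) (sum_nonneg fun ω _ => hf ω)) ω (mem_univ ω)
    simpa [hzero] using hc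
  refine le_of_mul_le_mul_right ?_ ht
  calc (#{ω | t < f ω} : ℝ) * t = ∑ ω ∈ {ω | t < f ω}, t := by rw [sum_const, nsmul_eq_mul]
    _ ≤ ∑ ω ∈ {ω | t < f ω}, f ω := sum_le_sum fun ω hω => (mem_filter.1 hω).2.le
    _ ≤ ∑ ω, f ω := sum_le_sum_of_subset_of_nonneg (subset_univ _) fun ω _ _ => hf ω
    _ ≤ c * t := h

section CountMean

variable {d P C : ℕ}

/-- `P` times the part of the error `(Sᵀ S z)_q - z_q` caused by the coordinates in `L`. -/
def sketchNoise (ω : SketchSpace d P C) (z : Fin d → ℝ) (q : Fin d) (L : Finset (Fin d)) : ℝ :=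
  ∑ p, ∑ i ∈ L, (if ω.1 p i = ω.1 p q then z i else 0) * (sgn (ω.2 p q) * sgn (ω.2 p i))

lemma SkT_Sk_sub_self (hP : P ≠ 0) (ω : SketchSpace d P C) (z : Fin d → ℝ) (q : Fin d) :
    SkT ω (Sk ω z) q - z q = (P : ℝ)⁻¹ * sketchNoise ω z q (univ.erase q) := by
  have hterm : ∀ p, sgn (ω.2 p q) * Sk ω z (p, ω.1 p q) = (Real.sqrt P)⁻¹ * (z q +
      ∑ i ∈ univ.erase q,
        (if ω.1 p i = ω.1 p q then z i else 0) * (sgn (ω.2 p q) * sgn (ω.2 p i))) := by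
    intro p
    rw [Sk, ← add_sum_erase _ _ (mem_univ q), mul_left_comm, mul_add, mul_sum]
    congr 2
    · simp [← mul_assoc, sgn_mul_self]
    · refine sum_congr rfl fun i _ => ?_
      split_ifs <;> ring
  have hsqrt : (Real.sqrt P)⁻¹ * (Real.sqrt P)⁻¹ = (P : ℝ)⁻¹ := by
    rw [← mul_inv, Real.mul_self_sqrt (Nat.cast_nonneg P)]
  simp only [SkT, hterm, ← mul_sum, sum_add_distrib, sum_const, card_univ, Fintype.card_fin,
    nsmul_eq_mul, ← mul_assoc, hsqrt, sketchNoise]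
  field_simp
  ring

lemma sketchNoise_eq_of_subset {ω : SketchSpace d P C} {z : Fin d → ℝ} {q : Fin d}
    {L L' : Finset (Fin d)} (hLL' : L ⊆ L') (h : ∀ p, ∀ i ∈ L', i ∉ L → ω.1 p i ≠ ω.1 p q) :
    sketchNoise ω z q L' = sketchNoise ω z q L :=
  sum_congr rfl fun p _ =>
    (sum_subset hLL' fun i hi hiL => by rw [if_neg (h p i hi hiL), zero_mul]).symm

/-- The signs make distinct cross terms orthogonal, and each surviving term needs a hash
collision, which has probability `1/C`. -/
lemma natCast_mul_sum_sketchNoise_sq {q : Fin d} {L : Finset (Fin d)} (hqL : q ∉ L)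
    (z : Fin d → ℝ) :
    C * ∑ ω : SketchSpace d P C, sketchNoise ω z q L ^ 2 =
      P * Fintype.card (SketchSpace d P C) * ∑ i ∈ L, z i ^ 2 := by
  have hL : ∀ c ∈ (univ : Finset (Fin P)) ×ˢ L, c.2 ≠ q := fun c hc h =>
    hqL (h ▸ (mem_product.1 hc).2)
  have hsigns : ∀ h : Fin P → Fin d → Fin C, ∑ s, sketchNoise (h, s) z q L ^ 2 =
      Fintype.card (Fin P → Fin d → Bool) *
        ∑ c ∈ (univ : Finset (Fin P)) ×ˢ L, (if h c.1 c.2 = h c.1 q then z c.2 else 0) ^ 2 := by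
    intro h
    simp only [sketchNoise, ← sum_product' univ L]
    exact sum_sq_sum_mul_eq_of_orthogonal _
      (fun (c : Fin P × Fin d) (s : Fin P → Fin d → Bool) => sgn (s c.1 q) * sgn (s c.1 c.2))
      (fun c hc c' hc' => sum_sgn_mul_sgn c c' (hL c hc) (hL c' hc'))
      (fun c => if h c.1 c.2 = h c.1 q then z c.2 else 0)
  have hhash : ∀ c ∈ (univ : Finset (Fin P)) ×ˢ L,
      (C : ℝ) * ∑ h : Fin P → Fin d → Fin C, (if h c.1 c.2 = h c.1 q then z c.2 else 0) ^ 2 =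
        Fintype.card (Fin P → Fin d → Fin C) * z c.2 ^ 2 := by
    intro c hc
    have hcount := card_mul_card_filter_apply_apply_eq (α := Fin C) c.1 (hL c hc)
    rw [Fintype.card_fin] at hcount
    simp only [ite_pow, zero_pow two_ne_zero, sum_ite, sum_const_zero, add_zero, sum_const,
      nsmul_eq_mul, ← mul_assoc]
    rw [← hcount]
    push_cast
    ring
  rw [Fintype.sum_prod_type]
  simp only [hsigns, ← mul_sum]
  rw [sum_comm, mul_left_comm, mul_sum, sum_congr rfl hhash, ← mul_sum, sum_product]
  simp only [sum_const, card_univ, Fintype.card_fin, nsmul_eq_mul, Fintype.card_prod]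
  push_cast
  ring

lemma eight_mul_card_filter_sketchNoise_le (hP : 0 < P) (hC : 0 < C) (z : Fin d → ℝ) {q : Fin d}
    {L : Finset (Fin d)} (hqL : q ∉ L) {T : ℝ} (hT : 0 ≤ T)
    (hL : 8 * ∑ i ∈ L, z i ^ 2 ≤ P * C * T) :
    8 * #{ω : SketchSpace d P C | T < ((P : ℝ)⁻¹ * sketchNoise ω z q L) ^ 2} ≤
      Fintype.card (SketchSpace d P C) := by
  have hP' : (0 : ℝ) < P := Nat.cast_pos.2 hP
  have hC' : (0 : ℝ) < C := Nat.cast_pos.2 hC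
  have hmoment : ∑ ω : SketchSpace d P C, sketchNoise ω z q L ^ 2 =
      P * Fintype.card (SketchSpace d P C) * (∑ i ∈ L, z i ^ 2) / C := by
    rw [eq_div_iff hC'.ne', mul_comm, natCast_mul_sum_sketchNoise_sq hqL]
  have hsum : ∑ ω : SketchSpace d P C, ((P : ℝ)⁻¹ * sketchNoise ω z q L) ^ 2 ≤
      Fintype.card (SketchSpace d P C) / 8 * T := by
    simp only [mul_pow, ← mul_sum]
    rw [hmoment]
    field_simp
    linarith
  have := cast_card_filter_lt_le_of_sum_le (fun ω => sq_nonneg _) hT (by positivity) hsum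
  rw [le_div_iff₀ (by norm_num)] at this
  exact_mod_cast (mul_comm _ _).trans_le this

lemma card_mul_card_filter_collision_le (I : Finset (Fin d)) (q : Fin d) :
    C * #{ω : SketchSpace d P C | ∃ p, ∃ i ∈ I, i ≠ q ∧ ω.1 p i = ω.1 p q} ≤
      P * #I * Fintype.card (SketchSpace d P C) := by
  have hpair : ∀ p i, C * #{ω : SketchSpace d P C | i ≠ q ∧ ω.1 p i = ω.1 p q} ≤
      Fintype.card (SketchSpace d P C) := by
    intro p i
    obtain rfl | hiq := eq_or_ne i q
    · simp
    have hprod : #{ω : SketchSpace d P C | i ≠ q ∧ ω.1 p i = ω.1 p q} =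
        #(({h : Fin P → Fin d → Fin C | h p i = h p q} : Finset _) ×ˢ
          (univ : Finset (Fin P → Fin d → Bool))) := by
      rw [← filter_product_left, univ_product_univ]
      simp [hiq]
    have hcount := card_mul_card_filter_apply_apply_eq (α := Fin C) (κ := Fin d) p hiq
    rw [Fintype.card_fin] at hcount
    rw [hprod, card_product, card_univ, ← mul_assoc, hcount, Fintype.card_prod]
  have hunion : ({ω : SketchSpace d P C | ∃ p, ∃ i ∈ I, i ≠ q ∧ ω.1 p i = ω.1 p q} : Finset _) ⊆
      univ.biUnion fun p => I.biUnion fun i =>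
        {ω : SketchSpace d P C | i ≠ q ∧ ω.1 p i = ω.1 p q} := by
    intro ω hω
    obtain ⟨p, i, hi, hcoll⟩ := (mem_filter.1 hω).2
    simp only [mem_biUnion, mem_filter]
    exact ⟨p, mem_univ p, i, hi, mem_univ ω, hcoll⟩
  calc C * #{ω : SketchSpace d P C | ∃ p, ∃ i ∈ I, i ≠ q ∧ ω.1 p i = ω.1 p q}
      ≤ C * ∑ p, ∑ i ∈ I, #{ω : SketchSpace d P C | i ≠ q ∧ ω.1 p i = ω.1 p q} := by
        refine Nat.mul_le_mul_left _ ((card_le_card hunion).trans ?_)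
        exact card_biUnion_le.trans (sum_le_sum fun p _ => card_biUnion_le)
    _ ≤ ∑ p : Fin P, ∑ i ∈ I, Fintype.card (SketchSpace d P C) := by
        simp only [mul_sum]
        exact sum_le_sum fun p _ => sum_le_sum fun i _ => hpair p i
    _ = P * #I * Fintype.card (SketchSpace d P C) := by simp [mul_assoc]

lemma four_mul_card_filter_sketch_error_le {k : ℕ} (hP : 0 < P) (hk : 0 < k) {α : ℝ} (hα : 0 < α)
    (hC₁ : 8 * P * k ≤ C) (hC₂ : 8 * k ≤ P * C * α) (z : Fin d → ℝ) (q : Fin d) :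
    4 * #{ω : SketchSpace d P C | α * tailNorm k z ^ 2 / k < (SkT ω (Sk ω z) q - z q) ^ 2} ≤
      Fintype.card (SketchSpace d P C) := by
  obtain ⟨I, hIk, hItail⟩ := exists_card_le_sum_compl_sq_le_tailNorm_sq k z
  set T := α * tailNorm k z ^ 2 / k
  have hC : 0 < C := lt_of_lt_of_le (by positivity) hC₁
  have hcollision : 8 * #{ω : SketchSpace d P C | ∃ p, ∃ i ∈ I, i ≠ q ∧ ω.1 p i = ω.1 p q} ≤
      Fintype.card (SketchSpace d P C) := by
    refine Nat.le_of_mul_le_mul_left ?_ hC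
    calc C * (8 * #{ω : SketchSpace d P C | ∃ p, ∃ i ∈ I, i ≠ q ∧ ω.1 p i = ω.1 p q})
        ≤ 8 * (P * #I * Fintype.card (SketchSpace d P C)) := by
          rw [mul_left_comm]
          exact Nat.mul_le_mul_left 8 (card_mul_card_filter_collision_le I q)
      _ ≤ C * Fintype.card (SketchSpace d P C) := by
          rw [← mul_assoc, ← mul_assoc]
          exact Nat.mul_le_mul_right _ (le_trans (by gcongr) hC₁)
  have hnoise : 8 * #{ω : SketchSpace d P C | T < ((P : ℝ)⁻¹ * sketchNoise ω z q (Iᶜ.erase q)) ^ 2}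
      ≤ Fintype.card (SketchSpace d P C) := by
    refine eight_mul_card_filter_sketchNoise_le hP hC z (notMem_erase q _) (by positivity) ?_
    calc 8 * ∑ i ∈ Iᶜ.erase q, z i ^ 2 ≤ 8 * tailNorm k z ^ 2 := by
          gcongr
          exact (sum_le_sum_of_subset_of_nonneg (erase_subset q _) fun i _ _ => sq_nonneg _).trans
            hItail
      _ ≤ P * C * T := by
          rw [mul_div_assoc', le_div_iff₀ (by positivity)]
          nlinarith [sq_nonneg (tailNorm k z)]
  have hsplit : ({ω : SketchSpace d P C | T < (SkT ω (Sk ω z) q - z q) ^ 2} : Finset _) ⊆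
      ({ω : SketchSpace d P C | ∃ p, ∃ i ∈ I, i ≠ q ∧ ω.1 p i = ω.1 p q} : Finset _) ∪
        ({ω : SketchSpace d P C | T < ((P : ℝ)⁻¹ * sketchNoise ω z q (Iᶜ.erase q)) ^ 2} :
          Finset _) := by
    intro ω hω
    rw [mem_union, mem_filter, mem_filter, or_iff_not_imp_left]
    rintro hcoll
    refine ⟨mem_univ ω, ?_⟩
    rw [← sketchNoise_eq_of_subset (erase_subset_erase q (subset_univ Iᶜ)),
      ← SkT_Sk_sub_self hP.ne']
    · exact (mem_filter.1 hω).2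
    · intro p i hi hiL hi'
      simp only [mem_erase, mem_compl, not_and, not_not] at hi hiL
      exact hcoll ⟨mem_univ ω, p, i, hiL hi.1, hi.1, hi'⟩
  have := (card_le_card hsplit).trans (card_union_le _ _)
  omega

end CountMean

section Median

variable {R : ℕ}

lemma le_apply_sort (x : Fin R → ℝ) {b : ℝ} {j : Fin R} (h : #{r | x r < b} ≤ j) :
    b ≤ x (Tuple.sort x j) := by
  by_contra! hlt
  have hmaps : Set.MapsTo (Tuple.sort x) (Iic j : Finset (Fin R))
      ({r | x r < b} : Finset (Fin R)) := fun j' hj' =>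
    mem_filter.2 ⟨mem_univ _, (Tuple.monotone_sort x (mem_Iic.1 hj')).trans_lt hlt⟩
  have := card_le_card_of_injOn _ hmaps (Tuple.sort x).injective.injOn
  rw [Fin.card_Iic] at this
  omega

lemma apply_sort_le (x : Fin R → ℝ) {b : ℝ} {j : Fin R} (h : #{r | b < x r} < R - j) :
    x (Tuple.sort x j) ≤ b := by
  by_contra! hlt
  have hmaps : Set.MapsTo (Tuple.sort x) (Ici j : Finset (Fin R))
      ({r | b < x r} : Finset (Fin R)) := fun j' hj' =>
    mem_filter.2 ⟨mem_univ _, hlt.trans_le (Tuple.monotone_sort x (mem_Ici.1 hj'))⟩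
  have := card_le_card_of_injOn _ hmaps (Tuple.sort x).injective.injOn
  rw [Fin.card_Ici] at this
  omega

lemma med_mem_Icc (x : Fin R → ℝ) {a b : ℝ} (ha : #{r | x r < a} < (R + 1) / 2)
    (hb : #{r | b < x r} < (R + 1) / 2) : med x ∈ Set.Icc a b := by
  have hR : R ≠ 0 := by rintro rfl; simp at ha
  have hlo := le_apply_sort x (b := a) (j := ⟨(R + 1) / 2 - 1, by omega⟩) (by dsimp only; omega)
  have hhi := apply_sort_le x (b := b) (j := ⟨R / 2, by omega⟩) (by dsimp only; omega)
  have hmono := Tuple.monotone_sort x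
    (show (⟨(R + 1) / 2 - 1, by omega⟩ : Fin R) ≤ ⟨R / 2, by omega⟩ from Fin.mk_le_mk.2 (by omega))
  simp only [Function.comp_apply] at hmono
  rw [med, dif_neg hR]
  constructor <;> linarith

lemma sq_med_sub_le (x : Fin R → ℝ) {c t : ℝ} (ht : 0 ≤ t)
    (h : #{r | t < (x r - c) ^ 2} < (R + 1) / 2) : (med x - c) ^ 2 ≤ t := by
  have hfar : ∀ r, (x r < c - Real.sqrt t ∨ c + Real.sqrt t < x r) → t < (x r - c) ^ 2 := by
    rintro r (hr | hr)
    · rw [← neg_sq, neg_sub]; exact Real.lt_sq_of_sqrt_lt (by linarith)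
    · exact Real.lt_sq_of_sqrt_lt (by linarith)
  have hmem := med_mem_Icc x (a := c - Real.sqrt t) (b := c + Real.sqrt t)
    ((card_le_card (monotone_filter_right _ fun r _ hr => hfar r (Or.inl hr))).trans_lt h)
    ((card_le_card (monotone_filter_right _ fun r _ hr => hfar r (Or.inr hr))).trans_lt h)
  rw [Real.sq_le ht]
  constructor <;> linarith [hmem.1, hmem.2]

end Median

/-- Markov's inequality for `a ^ #{r | ω r ∈ B}`, whose sum over `ω` factorizes over `r`. -/
lemma pow_mul_card_filter_le_card_compl_add_mul_pow {Ω : Type*} [Fintype Ω] [DecidableEq Ω]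
    (B : Finset Ω) {a : ℕ} (ha : 0 < a) (R m : ℕ) :
    a ^ m * #{ω : Fin R → Ω | m ≤ #{r | ω r ∈ B}} ≤ (#Bᶜ + a * #B) ^ R := by
  have hweight : ∀ ω : Fin R → Ω, ∏ r, (if ω r ∈ B then a else 1) = a ^ #{r | ω r ∈ B} := by
    intro ω
    rw [prod_ite, prod_const, prod_const_one, mul_one]
  calc a ^ m * #{ω : Fin R → Ω | m ≤ #{r | ω r ∈ B}}
      = ∑ ω ∈ {ω : Fin R → Ω | m ≤ #{r | ω r ∈ B}}, a ^ m := by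
        rw [sum_const, smul_eq_mul, mul_comm]
    _ ≤ ∑ ω ∈ {ω : Fin R → Ω | m ≤ #{r | ω r ∈ B}}, a ^ #{r | ω r ∈ B} :=
        sum_le_sum fun ω hω => Nat.pow_le_pow_right ha (mem_filter.1 hω).2
    _ ≤ ∑ ω : Fin R → Ω, ∏ r, (if ω r ∈ B then a else 1) := by
        simp only [hweight]
        exact sum_le_sum_of_subset (filter_subset _ _)
    _ = (#Bᶜ + a * #B) ^ R := by
        rw [← Fintype.prod_sum fun (_ : Fin R) (y : Ω) => if y ∈ B then a else 1, prod_const,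
          card_univ, Fintype.card_fin, sum_ite, sum_const, sum_const, smul_eq_mul, smul_eq_mul,
          mul_one, add_comm, mul_comm, filter_mem_eq_inter, univ_inter, filter_notMem_eq_sdiff,
          ← compl_eq_univ_sdiff]

/-- If the median misses `c` by more than `√t`, so do at least half of the estimates. -/
lemma two_pow_mul_card_filter_med_le {Ω : Type*} [Fintype Ω] [DecidableEq Ω] (x : Ω → ℝ)
    {c t : ℝ} (ht : 0 ≤ t) (hx : 4 * #{ω | t < (x ω - c) ^ 2} ≤ Fintype.card Ω) (R : ℕ) :
    2 ^ R * #{ω : Fin R → Ω | t < (med (fun r => x (ω r)) - c) ^ 2} ≤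
      3 ^ (R / 2) * Fintype.card Ω ^ R := by
  set B : Finset Ω := {ω | t < (x ω - c) ^ 2}
  have hsub : ({ω : Fin R → Ω | t < (med (fun r => x (ω r)) - c) ^ 2} : Finset _) ⊆
      ({ω : Fin R → Ω | (R + 1) / 2 ≤ #{r | ω r ∈ B}} : Finset _) :=
    monotone_filter_right _ fun ω _ hω => by
      by_contra! hfew
      refine (sq_med_sub_le _ ht ?_).not_gt hω
      simpa [B] using hfew
  have hchernoff :=
    pow_mul_card_filter_le_card_compl_add_mul_pow B (a := 3) (by norm_num) R ((R + 1) / 2)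
  have hweights : 2 * (#Bᶜ + 3 * #B) ≤ 3 * Fintype.card Ω := by
    have := card_compl_add_card B
    omega
  refine Nat.le_of_mul_le_mul_left ?_ (pow_pos (by norm_num : 0 < 3) ((R + 1) / 2))
  calc 3 ^ ((R + 1) / 2) * (2 ^ R * #{ω : Fin R → Ω | t < (med (fun r => x (ω r)) - c) ^ 2})
      ≤ 2 ^ R * (3 ^ ((R + 1) / 2) * #{ω : Fin R → Ω | (R + 1) / 2 ≤ #{r | ω r ∈ B}}) := by
        rw [mul_left_comm]
        gcongr
    _ ≤ (2 * (#Bᶜ + 3 * #B)) ^ R := by rw [mul_pow]; gcongr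
    _ ≤ (3 * Fintype.card Ω) ^ R := by gcongr
    _ = 3 ^ ((R + 1) / 2) * (3 ^ (R / 2) * Fintype.card Ω ^ R) := by
        rw [mul_pow, ← mul_assoc, ← pow_add]
        congr 2
        omega

lemma exp_quarter_le : Real.exp (1 / 4) ≤ 4 / 3 := by
  have h := Real.add_one_le_exp (-(1 / 4))
  rw [Real.exp_neg, inv_eq_one_div, le_div_iff₀ (Real.exp_pos _)] at h
  linarith

/-- `(2d/β)² ≤ e^{R/4} ≤ (4/3)^R`. -/
lemma mul_three_pow_half_le {d β : ℝ} (hd : 0 ≤ d) (hβ : 0 < β) {R : ℕ}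
    (hR : 8 * Real.log (2 * d / β) ≤ R) : d * 3 ^ (R / 2) ≤ β * 2 ^ R := by
  have hratio : (2 * d / β) ^ 2 ≤ (4 / 3) ^ R :=
    calc (2 * d / β) ^ 2 ≤ Real.exp (Real.log (2 * d / β)) ^ 2 :=
          pow_le_pow_left₀ (by positivity) (Real.le_exp_log _) 2
      _ = Real.exp (2 * Real.log (2 * d / β)) := by rw [← Real.exp_nat_mul]; norm_num
      _ ≤ Real.exp (1 / 4) ^ R := by
          rw [← Real.exp_nat_mul]
          exact Real.exp_le_exp.2 (by linarith)
      _ ≤ (4 / 3) ^ R := pow_le_pow_left₀ (Real.exp_pos _).le exp_quarter_le R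
  rw [div_pow, div_pow, div_le_div_iff₀ (by positivity) (by positivity)] at hratio
  refine (pow_le_pow_iff_left₀ (by positivity) (by positivity) two_ne_zero).1 ?_
  calc (d * 3 ^ (R / 2)) ^ 2 = d ^ 2 * 3 ^ (2 * (R / 2)) := by ring
    _ ≤ d ^ 2 * 3 ^ R := by gcongr; norm_num; omega
    _ ≤ (β * 2 ^ R) ^ 2 := by
        have h4 : (4 : ℝ) ^ R = (2 ^ R) ^ 2 := by rw [← pow_mul, mul_comm, pow_mul]; norm_num
        nlinarith [pow_pos (by norm_num : (0 : ℝ) < 3) R]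

lemma one_sub_ofReal_le_unifMeasure {α : Type*} [Fintype α] [Nonempty α] [MeasurableSpace α]
    [MeasurableSingletonClass α] {s : Set α} {B : Finset α} (hB : sᶜ ⊆ B) {β : ℝ}
    (h : (#B : ℝ) ≤ β * Fintype.card α) : 1 - ENNReal.ofReal β ≤ unifMeasure α s := by
  have hμ : ∀ t : Finset α, unifMeasure α t = (Fintype.card α : ℝ≥0∞)⁻¹ * #t := fun t => by
    rw [unifMeasure, Measure.smul_apply, smul_eq_mul, Measure.count_apply_finset]
  have hcard : (Fintype.card α : ℝ≥0∞) ≠ 0 := by simp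
  have hB' : unifMeasure α B ≤ ENNReal.ofReal β := by
    rw [hμ, ENNReal.inv_mul_le_iff hcard (ENNReal.natCast_ne_top _), ← ENNReal.ofReal_natCast,
      ← ENNReal.ofReal_natCast, ← ENNReal.ofReal_mul (Nat.cast_nonneg _), mul_comm]
    exact ENNReal.ofReal_le_ofReal h
  have huniv : unifMeasure α Set.univ = 1 := by
    rw [← coe_univ, hμ, card_univ]
    exact ENNReal.inv_mul_cancel hcard (ENNReal.natCast_ne_top _)
  rw [tsub_le_iff_right, ← huniv]
  calc unifMeasure α Set.univ ≤ unifMeasure α s + unifMeasure α sᶜ := measure_univ_le_add_compl s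
    _ ≤ unifMeasure α s + ENNReal.ofReal β := by gcongr; exact (measure_mono hB).trans hB'

lemma cast_card_biUnion_le {ι Ω : Type*} [Fintype ι] [DecidableEq Ω] (S : ι → Finset Ω) {b : ℝ}
    (h : ∀ i, (#(S i) : ℝ) ≤ b) : (#(univ.biUnion S) : ℝ) ≤ Fintype.card ι * b :=
  calc (#(univ.biUnion S) : ℝ) ≤ ∑ i, (#(S i) : ℝ) := by exact_mod_cast card_biUnion_le
    _ ≤ Fintype.card ι * b := by
        simpa only [sum_const, card_univ, nsmul_eq_mul] using sum_le_sum fun i (_ : i ∈ univ) => h i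

theorem count_median_of_means_linf_general
    {d P k : ℕ} (hP : 1 ≤ P) (hk : 1 ≤ k)
    {α β : ℝ} (hα0 : 0 < α) (hβ0 : 0 < β)
    {C : ℕ} (hC : max (8 * P * k : ℝ) (8 * k / (P * α)) ≤ (C : ℝ))
    {R : ℕ} (hR : 8 * Real.log (2 * d / β) ≤ (R : ℝ))
    (z : Fin d → ℝ) :
    1 - ENNReal.ofReal β ≤
      unifMeasure (MoMSpace d P C R)
        {ω | ∀ q : Fin d,
          (MoMU ω (fun r => Sk (ω r) z) q - z q) ^ 2 ≤ α * tailNorm k z ^ 2 / k} := by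
  obtain ⟨hC₁, hC₂⟩ := max_le_iff.1 hC
  rw [div_le_iff₀ (by positivity)] at hC₂
  have hC₁' : 8 * P * k ≤ C := by exact_mod_cast hC₁
  have : NeZero C := ⟨(lt_of_lt_of_le (by positivity) hC₁').ne'⟩
  set T := α * tailNorm k z ^ 2 / k
  let fail (q : Fin d) : Finset (MoMSpace d P C R) :=
    {ω | T < (MoMU ω (fun r => Sk (ω r) z) q - z q) ^ 2}
  have hfail (q : Fin d) :
      (#(fail q) : ℝ) ≤ 3 ^ (R / 2) / 2 ^ R * Fintype.card (MoMSpace d P C R) := by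
    rw [Fintype.card_fun, Fintype.card_fin, div_mul_eq_mul_div, le_div_iff₀ (by positivity),
      mul_comm]
    exact_mod_cast two_pow_mul_card_filter_med_le (fun ω => SkT ω (Sk ω z) q) (by positivity)
      (four_mul_card_filter_sketch_error_le hP hk hα0 hC₁' (by linarith) z q) R
  refine one_sub_ofReal_le_unifMeasure (B := univ.biUnion fail)
    (fun ω hω => by simpa [fail] using hω) ?_
  calc (#(univ.biUnion fail) : ℝ)
      ≤ d * (3 ^ (R / 2) / 2 ^ R * Fintype.card (MoMSpace d P C R)) := by
        simpa using cast_card_biUnion_le fail hfail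
    _ ≤ β * Fintype.card (MoMSpace d P C R) := by
        rw [← mul_assoc, mul_div_assoc']
        gcongr
        rw [div_le_iff₀ (by positivity)]
        exact mul_three_pow_half_le (Nat.cast_nonneg d) hβ0 hR

/-- `ℓ∞` guarantee for the (noiseless) count-median-of-means sketch:
with probability at least `1 − β`, simultaneously for all coordinates `q`,
`(U(S(z))_q − z_q)² ≤ α‖z_tail(k)‖²/k`. -/
theorem count_median_of_means_linf
    {d P k : ℕ} (hd : 1 ≤ d) (hP : 1 ≤ P) (hk : 1 ≤ k) (hkd : k ≤ d)
    {α β : ℝ} (hα0 : 0 < α) (hα1 : α ≤ 1) (hβ0 : 0 < β) (hβ1 : β < 1)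
    {C : ℕ} (hC : max (8 * P * k : ℝ) (8 * k / (P * α)) ≤ (C : ℝ))
    {R : ℕ} (hR : 8 * Real.log (2 * d / β) ≤ (R : ℝ))
    (z : Fin d → ℝ) :
    1 - ENNReal.ofReal β ≤
      unifMeasure (MoMSpace d P C R)
        {ω | ∀ q : Fin d,
          (MoMU ω (fun r => Sk (ω r) z) q - z q) ^ 2 ≤ α * tailNorm k z ^ 2 / k} :=
  count_median_of_means_linf_general hP hk hα0 hβ0 hC hR z
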